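/- Let m ≥ 1, n ≥ 0 and 0 ≤ l < 2m be integers with N := 2nm + l ≥ 1. Suppose P ∈ ℂ[X] is a monic polynomial of degree N of the form P(z) = z^N + Σ_{k=0}^{n−1} a_k z^{2km + l} with a_0, …, a_{n−1} ∈ ℝ, and that for each k ∈ {0, 1, …, 2m−1} there exist points 0 ≤ x_0 < x_1 < … < x_n ≤ 2^{1/m} and σ_k ∈ ℂ with |σ_k| = 1 such that P(e^{iπk/m} x_j) = σ_k (−1)^j · sup_{z ∈ E_m}|P(z)| for j = 0, 1, …, n. Then P attains the Chebyshev norm: sup_{z ∈ E_m} |P(z)| = t_N(E_m). -/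

import Mathlib

/-!
On the positive real ray `P (t) = t ^ l * p (t ^ (2m))` with `p` real and monic of degree `n`.
For a monic competitor `Q` of degree `N`, averaging `Q (ω ^ k z)` over the `2m`-th roots of unity
`ω ^ k` with weights `ω ^ (-k l)` keeps exactly the monomials of `Q` of degree `≡ l (mod 2m)`; on
the ray the real part of this average is `t ^ l * q (t ^ (2m))` with `q` real and monic of degree
`n`, and it is bounded by `‖Q‖_{E_m}` because `E_m` is invariant under these rotations. If
`‖Q‖_{E_m} < ‖P‖_{E_m}`, then `t ^ l * (p - q) (t ^ (2m))` changes sign between consecutive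
alternation points, so `p - q`, of degree `< n`, has `n` distinct positive zeros and vanishes;
but then `‖P‖_{E_m} = |P (x₀)| ≤ ‖Q‖_{E_m}`.
-/

/-- The `n`-th Chebyshev norm of a set `E ⊆ ℂ`:
`t_n(E) = inf { sup_{z ∈ E} |P(z)| : P monic of degree n }`. -/
noncomputable def chebNorm (E : Set ℂ) (n : ℕ) : ℝ :=
  sInf { r : ℝ | ∃ P : Polynomial ℂ, P.Monic ∧ P.natDegree = n ∧
    r = ⨆ z ∈ E, ‖P.eval z‖ }

/-- The star `E_m = { z ∈ ℂ : z^m ∈ [-2, 2] }`. -/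
def Estar (m : ℕ) : Set ℂ := { z : ℂ | ∃ x ∈ Set.Icc (-2 : ℝ) 2, (x : ℂ) = z ^ m }

open Polynomial Finset

theorem Finset.sum_range_mul_eq_sum_sum {M : Type*} [AddCommMonoid M] (g : ℕ → M) (d n : ℕ) :
    ∑ j ∈ range (d * n), g j = ∑ i ∈ range n, ∑ s ∈ range d, g (d * i + s) := by
  induction n with
  | zero => simp
  | succ n ih => rw [mul_add_one, sum_range_add, ih, sum_range_succ]

namespace IsPrimitiveRoot

variable {R : Type*} [CommRing R] [IsDomain R] {ω : R} {d : ℕ}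

theorem geom_sum_pow_eq_ite (hω : IsPrimitiveRoot ω d) (a : ℕ) :
    ∑ k ∈ range d, (ω ^ a) ^ k = if d ∣ a then (d : R) else 0 := by
  split_ifs with h
  · simp [(hω.pow_eq_one_iff_dvd a).2 h]
  · have hne : ω ^ a ≠ 1 := mt (hω.pow_eq_one_iff_dvd a).1 h
    have hpow : (ω ^ a) ^ d = 1 := by rw [← pow_mul, mul_comm, pow_mul, hω.pow_eq_one, one_pow]
    have hgeom := geom_sum_mul (ω ^ a) d
    rw [hpow, sub_self] at hgeom
    exact (mul_eq_zero.1 hgeom).resolve_right (sub_ne_zero.2 hne)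

/-- Discrete Fourier filter: the weight `ω ^ (k * (d - l))` is `ω ^ (-k l)` without inverses. -/
theorem sum_pow_mul_eval_mul (hω : IsPrimitiveRoot ω d) {l n : ℕ} (hl : l < d) {Q : R[X]}
    (hQ : Q.natDegree < d * (n + 1)) (x : R) :
    ∑ k ∈ range d, ω ^ (k * (d - l)) * Q.eval (ω ^ k * x) =
      d * ∑ i ∈ range (n + 1), Q.coeff (d * i + l) * x ^ (d * i + l) := by
  have hgeom : ∀ i s, s < d →
      ∑ k ∈ range d, (ω ^ (d * i + s + (d - l))) ^ k = if s = l then (d : R) else 0 := by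
    intro i s hs
    have hdvd : d ∣ d * i + s + (d - l) ↔ s = l := by
      rw [add_assoc, Nat.dvd_add_right (dvd_mul_right d i)]
      constructor
      · intro h
        have := Nat.eq_of_dvd_of_lt_two_mul (by omega) h (by omega)
        omega
      · rintro rfl
        rw [Nat.add_sub_cancel' hl.le]
    simp only [hω.geom_sum_pow_eq_ite, hdvd]
  calc ∑ k ∈ range d, ω ^ (k * (d - l)) * Q.eval (ω ^ k * x)
      = ∑ j ∈ range (d * (n + 1)),
          Q.coeff j * x ^ j * ∑ k ∈ range d, (ω ^ (j + (d - l))) ^ k := by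
        simp_rw [eval_eq_sum_range' hQ, mul_sum]
        rw [sum_comm]
        exact sum_congr rfl fun j _ => sum_congr rfl fun k _ => by ring
    _ = ∑ i ∈ range (n + 1), ∑ s ∈ range d,
          Q.coeff (d * i + s) * x ^ (d * i + s) * if s = l then (d : R) else 0 := by
        rw [sum_range_mul_eq_sum_sum]
        exact sum_congr rfl fun i _ => sum_congr rfl fun s hs => by rw [hgeom i s (mem_range.1 hs)]
    _ = _ := by simp [mul_sum, hl, mul_comm]

end IsPrimitiveRoot

noncomputable def lacunaryPoly {R : Type*} [Semiring R] (d l : ℕ) {n : ℕ} (c : Fin n → R) : R[X] :=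
  X ^ (d * n + l) + ∑ k : Fin n, C (c k) * X ^ (d * k + l)

section lacunaryPoly

variable {R : Type*} {d l n : ℕ}

theorem degree_sum_C_mul_X_pow_lt [Semiring R] [Nontrivial R] (hd : 0 < d) (c : Fin n → R) :
    (∑ k : Fin n, C (c k) * X ^ (d * k + l) : R[X]).degree < ↑(d * n + l) := by
  refine (degree_sum_le _ _).trans_lt ((Finset.sup_lt_iff (WithBot.bot_lt_coe _)).2 fun k _ => ?_)
  have := Nat.mul_lt_mul_of_pos_left k.2 hd
  exact (degree_C_mul_X_pow_le _ _).trans_lt (by exact_mod_cast (by omega : d * k + l < d * n + l))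

theorem monic_lacunaryPoly [Semiring R] [Nontrivial R] (hd : 0 < d) (c : Fin n → R) :
    (lacunaryPoly d l c).Monic :=
  monic_X_pow_add (degree_sum_C_mul_X_pow_lt hd c)

theorem natDegree_lacunaryPoly [Semiring R] [Nontrivial R] (hd : 0 < d) (c : Fin n → R) :
    (lacunaryPoly d l c).natDegree = d * n + l :=
  natDegree_eq_of_degree_eq_some <| by
    rw [lacunaryPoly, degree_add_eq_left_of_degree_lt, degree_X_pow]
    simpa only [degree_X_pow] using degree_sum_C_mul_X_pow_lt hd c

theorem eval_lacunaryPoly_sub [CommRing R] (c c' : Fin n → R) (t : R) :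
    (lacunaryPoly d l c).eval t - (lacunaryPoly d l c').eval t =
      t ^ l * (∑ k : Fin n, C (c k - c' k) * X ^ (k : ℕ)).eval (t ^ d) := by
  simp only [lacunaryPoly, eval_add, eval_finsetSum, eval_mul, eval_C, eval_pow, eval_X, mul_sum]
  rw [add_sub_add_left_eq_sub, ← sum_sub_distrib]
  exact sum_congr rfl fun k _ => by ring

end lacunaryPoly

theorem abs_eval_lacunaryPoly_re_coeff_le {ω : ℂ} {d l n : ℕ} (hω : IsPrimitiveRoot ω d)
    (hl : l < d) {Q : ℂ[X]} (hQ : Q.Monic) (hQdeg : Q.natDegree = d * n + l) {K : Set ℂ}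
    (hK : ∀ z ∈ K, ω * z ∈ K) {M : ℝ} (hM : ∀ z ∈ K, ‖Q.eval z‖ ≤ M) {t : ℝ} (ht : (t : ℂ) ∈ K) :
    |(lacunaryPoly d l fun k : Fin n => (Q.coeff (d * k + l)).re).eval t| ≤ M := by
  have hd : 0 < d := by omega
  have hrot : ∀ k : ℕ, ω ^ k * t ∈ K := by
    intro k
    induction k with
    | zero => simpa using ht
    | succ k ih => simpa [pow_succ', mul_assoc] using hK _ ih
  set S := ∑ i ∈ range (n + 1), Q.coeff (d * i + l) * (t : ℂ) ^ (d * i + l) with hSdef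
  have hfilter : ∑ k ∈ range d, ω ^ (k * (d - l)) * Q.eval (ω ^ k * t) = d * S :=
    hω.sum_pow_mul_eval_mul hl (by rw [hQdeg]; nlinarith) t
  have hre : (lacunaryPoly d l fun k : Fin n => (Q.coeff (d * k + l)).re).eval t = S.re := by
    have hlead : Q.coeff (d * n + l) = 1 := hQdeg ▸ hQ.coeff_natDegree
    have hterm : ∀ i, (Q.coeff (d * i + l) * (t : ℂ) ^ (d * i + l)).re =
        (Q.coeff (d * i + l)).re * t ^ (d * i + l) := fun i => by
      rw [← Complex.ofReal_pow, Complex.re_mul_ofReal]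
    rw [hSdef, sum_range_succ, Complex.add_re, Complex.re_sum, hlead, one_mul, ← Complex.ofReal_pow,
      Complex.ofReal_re]
    simp only [hterm, lacunaryPoly, eval_add, eval_pow, eval_X, eval_finsetSum, eval_mul, eval_C]
    rw [Fin.sum_univ_eq_sum_range (fun k => (Q.coeff (d * k + l)).re * t ^ (d * k + l)), add_comm]
  have hS : (d : ℝ) * ‖S‖ ≤ d * M :=
    calc (d : ℝ) * ‖S‖ = ‖∑ k ∈ range d, ω ^ (k * (d - l)) * Q.eval (ω ^ k * t)‖ := by
          rw [hfilter, norm_mul, Complex.norm_natCast]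
      _ ≤ ∑ k ∈ range d, ‖ω ^ (k * (d - l)) * Q.eval (ω ^ k * t)‖ := norm_sum_le _ _
      _ ≤ ∑ k ∈ range d, M := sum_le_sum fun k _ => by
          rw [norm_mul, norm_pow, hω.norm'_eq_one hd.ne', one_pow, one_mul]
          exact hM _ (hrot k)
      _ = d * M := by simp
  rw [hre]
  exact (Complex.abs_re_le_norm S).trans (le_of_mul_le_mul_left hS (by exact_mod_cast hd))

theorem exists_strictMono_zeros_of_alternating {n : ℕ} {f : ℝ → ℝ} (hf : Continuous f)
    {x : Fin (n + 1) → ℝ} (hx : StrictMono x)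
    (hsign : ∀ j : Fin n, f (x j.castSucc) * f (x j.succ) < 0) :
    ∃ t : Fin n → ℝ, StrictMono t ∧ ∀ j, x j.castSucc < t j ∧ f (t j) = 0 := by
  have hzero : ∀ j : Fin n, ∃ t ∈ Set.Ioo (x j.castSucc) (x j.succ), f t = 0 := by
    intro j
    have hlt := hx (Fin.castSucc_lt_succ (i := j))
    rcases mul_neg_iff.1 (hsign j) with ⟨h1, h2⟩ | ⟨h1, h2⟩
    · exact intermediate_value_Ioo' hlt.le hf.continuousOn ⟨h2, h1⟩
    · exact intermediate_value_Ioo hlt.le hf.continuousOn ⟨h1, h2⟩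
  choose t ht hft using hzero
  refine ⟨t, fun i j hij => ?_, fun j => ⟨(ht j).1, hft j⟩⟩
  calc t i < x i.succ := (ht i).2
    _ ≤ x j.castSucc := hx.monotone (Fin.succ_le_castSucc_iff.2 hij)
    _ < t j := (ht j).1

theorem exists_abs_eval_le_of_alternating {d l n : ℕ} (hd : 0 < d) (a b : Fin n → ℝ)
    {x : Fin (n + 1) → ℝ} (hx : StrictMono x) (hx0 : 0 ≤ x 0)
    (halt : ∀ j,
      (lacunaryPoly d l a).eval (x j) = (-1) ^ (j : ℕ) * (lacunaryPoly d l a).eval (x 0)) :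
    ∃ j, |(lacunaryPoly d l a).eval (x 0)| ≤ |(lacunaryPoly d l b).eval (x j)| := by
  set p := lacunaryPoly d l a
  set g := lacunaryPoly d l b
  by_contra! hlt
  have hsign : ∀ j : Fin n, (p.eval (x j.castSucc) - g.eval (x j.castSucc)) *
      (p.eval (x j.succ) - g.eval (x j.succ)) < 0 := by
    intro j
    have key : ∀ c u v : ℝ, |u| < |c| → |v| < |c| → (c - u) * (-c - v) < 0 := by
      intro c u v hu hv
      rcases abs_cases c with ⟨hc, -⟩ | ⟨hc, -⟩ <;> rw [hc] at hu hv <;>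
        cases abs_lt.1 hu <;> cases abs_lt.1 hv <;> nlinarith
    have hc : |(-1) ^ (j : ℕ) * p.eval (x 0)| = |p.eval (x 0)| := by simp [abs_mul]
    have h := key _ _ _ (hc ▸ hlt j.castSucc) (hc ▸ hlt j.succ)
    rw [halt j.castSucc, halt j.succ, Fin.val_castSucc, Fin.val_succ, pow_succ]
    linarith
  obtain ⟨t, ht, htx⟩ := exists_strictMono_zeros_of_alternating
    (f := fun y => p.eval y - g.eval y) (p.continuous.sub g.continuous) hx hsign
  have htpos : ∀ j, 0 < t j := fun j =>
    hx0.trans_lt ((hx.monotone (Fin.zero_le _)).trans_lt (htx j).1)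
  have hq : (∑ k : Fin n, C (a k - b k) * X ^ (k : ℕ)) = 0 := by
    have hdeg : (∑ k : Fin n, C (a k - b k) * X ^ (k : ℕ)).degree <
        ((#(univ : Finset (Fin n)) : ℕ) : WithBot ℕ) := by
      rw [card_univ, Fintype.card_fin]
      exact degree_sum_fin_lt _
    refine eq_zero_of_degree_lt_of_eval_index_eq_zero univ (v := fun j => t j ^ d)
      (fun i _ j _ h => ?_) hdeg fun j _ => ?_
    · exact ht.injective <| (pow_left_strictMonoOn₀ hd.ne').injOn (htpos i).le (htpos j).le h
    · have hz := (htx j).2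
      rw [eval_lacunaryPoly_sub] at hz
      exact (mul_eq_zero.1 hz).resolve_left (pow_ne_zero _ (htpos j).ne')
  have h0 := eval_lacunaryPoly_sub (d := d) (l := l) a b (x 0)
  rw [hq, eval_zero, mul_zero, sub_eq_zero] at h0
  exact (hlt 0).ne (by rw [← h0])

theorem IsCompact.le_biSup {X : Type*} [TopologicalSpace X] {K : Set X} (hK : IsCompact K)
    {f : X → ℝ} (hf : ContinuousOn f K) {x : X} (hx : x ∈ K) : f x ≤ ⨆ z ∈ K, f z :=
  le_ciSup₂ (f := fun z (_ : z ∈ K) => f z)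
    ((hK.bddAbove_image hf).mono (by rintro _ ⟨_, ⟨z, rfl⟩, hz, rfl⟩; exact ⟨z, hz, rfl⟩)) x hx

theorem chebNorm_eq_of_forall_le {E : Set ℂ} {N : ℕ} {P : ℂ[X]} (hP : P.Monic)
    (hPdeg : P.natDegree = N)
    (hmin : ∀ Q : ℂ[X], Q.Monic → Q.natDegree = N →
      (⨆ z ∈ E, ‖P.eval z‖) ≤ ⨆ z ∈ E, ‖Q.eval z‖) :
    (⨆ z ∈ E, ‖P.eval z‖) = chebNorm E N := by
  refine le_antisymm (le_csInf ⟨_, P, hP, hPdeg, rfl⟩ ?_) (csInf_le ⟨0, ?_⟩ ⟨P, hP, hPdeg, rfl⟩)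
  · rintro _ ⟨Q, hQ, hQdeg, rfl⟩
    exact hmin Q hQ hQdeg
  · rintro _ ⟨Q, -, -, rfl⟩
    exact Real.iSup_nonneg fun z => Real.iSup_nonneg fun _ => norm_nonneg _

section Estar

variable {m : ℕ}

theorem isCompact_Estar (hm : m ≠ 0) : IsCompact (Estar m) := by
  have hclosed : IsClosed (Estar m) :=
    (isCompact_Icc.image Complex.continuous_ofReal).isClosed.preimage (continuous_pow m)
  refine (isCompact_closedBall (0 : ℂ) 2).of_isClosed_subset hclosed fun z ⟨x, hx, hxz⟩ => ?_
  rw [Metric.mem_closedBall, dist_zero_right]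
  by_contra! hz
  have hpow : ‖z‖ ^ m = |x| := by rw [← norm_pow, ← hxz, Complex.norm_real, Real.norm_eq_abs]
  have := le_self_pow₀ (by linarith : (1 : ℝ) ≤ ‖z‖) hm
  linarith [abs_le.2 hx]

theorem mul_mem_Estar {ζ z : ℂ} (hζ : ζ ^ (2 * m) = 1) (hz : z ∈ Estar m) : ζ * z ∈ Estar m := by
  obtain ⟨x, hx, hxz⟩ := hz
  have hζm : ζ ^ m = 1 ∨ ζ ^ m = -1 := sq_eq_one_iff.1 (by rw [← pow_mul, mul_comm, hζ])
  rcases hζm with h | h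
  · exact ⟨x, hx, by rw [mul_pow, h, one_mul, hxz]⟩
  · exact ⟨-x, by constructor <;> linarith [hx.1, hx.2], by push_cast; rw [mul_pow, h, hxz]; ring⟩

theorem ofReal_mem_Estar (hm : m ≠ 0) {t : ℝ} (ht : t ∈ Set.Icc 0 ((2 : ℝ) ^ ((1 : ℝ) / m))) :
    (t : ℂ) ∈ Estar m := by
  have hle : t ^ m ≤ 2 := by
    calc t ^ m ≤ ((2 : ℝ) ^ ((1 : ℝ) / m)) ^ m := pow_le_pow_left₀ ht.1 ht.2 m
      _ = 2 := by
        rw [← Real.rpow_mul_natCast (by norm_num), one_div, inv_mul_cancel₀ (by exact_mod_cast hm),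
          Real.rpow_one]
  exact ⟨t ^ m, ⟨by linarith [pow_nonneg ht.1 m], hle⟩, by push_cast; rfl⟩

end Estar

theorem alternating_of_map_eval_eq {n : ℕ} {p : ℝ[X]} {x : Fin (n + 1) → ℝ} {σ : ℂ} {M : ℝ}
    (hσ : ‖σ‖ = 1) (hM : 0 ≤ M)
    (h : ∀ j, (p.map (algebraMap ℝ ℂ)).eval (x j : ℂ) = σ * (-1) ^ (j : ℕ) * M) :
    M = |p.eval (x 0)| ∧ ∀ j, p.eval (x j) = (-1) ^ (j : ℕ) * p.eval (x 0) := by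
  have hreal : ∀ t : ℝ, (p.map (algebraMap ℝ ℂ)).eval (t : ℂ) = ((p.eval t : ℝ) : ℂ) := fun t => by
    rw [eval_map_algebraMap]
    exact aeval_algebraMap_apply_eq_algebraMap_eval t p
  simp only [hreal] at h
  refine ⟨?_, fun j => ?_⟩
  · have hnorm := congrArg norm (h 0)
    simp only [Complex.norm_real, Real.norm_eq_abs, Fin.val_zero, pow_zero, mul_one,
      Complex.norm_mul, hσ, abs_of_nonneg hM, one_mul] at hnorm
    exact hnorm.symm
  · have hj : ((p.eval (x j) : ℝ) : ℂ) = (((-1) ^ (j : ℕ) * p.eval (x 0) : ℝ) : ℂ) := by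
      push_cast
      rw [h j, h 0, Fin.val_zero, pow_zero, mul_one]
      ring
    exact_mod_cast hj

theorem chebyshev_Estar_alternation_sufficient_general
    (m n l : ℕ) (hm : 1 ≤ m) (hl : l < 2 * m)
    (N : ℕ) (hN : N = 2 * n * m + l)
    (P : Polynomial ℂ) (a : Fin n → ℝ)
    (hform : P = Polynomial.X ^ N +
      ∑ k : Fin n, Polynomial.C ((a k : ℝ) : ℂ) * Polynomial.X ^ (2 * (k : ℕ) * m + l))
    (halt : ∀ k : ℕ, k < 2 * m → ∃ x : Fin (n + 1) → ℝ, StrictMono x ∧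
      (∀ j, x j ∈ Set.Icc (0 : ℝ) ((2 : ℝ) ^ ((1 : ℝ) / (m : ℝ)))) ∧
      ∃ σ : ℂ, ‖σ‖ = 1 ∧ ∀ j : Fin (n + 1),
        P.eval (Complex.exp (Real.pi * (k : ℂ) * Complex.I / (m : ℂ)) * (x j : ℂ))
          = σ * (-1) ^ (j : ℕ) *
              ((⨆ z ∈ Estar m, ‖P.eval z‖ : ℝ) : ℂ)) :
    (⨆ z ∈ Estar m, ‖P.eval z‖) = chebNorm (Estar m) N := by
  have hm0 : m ≠ 0 := by omega
  have hd : 0 < 2 * m := by omega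
  set p := lacunaryPoly (2 * m) l a
  have hPp : P = p.map (algebraMap ℝ ℂ) := by
    simp [hform, hN, p, lacunaryPoly, Polynomial.map_sum, mul_right_comm 2 _ m]
  set M := ⨆ z ∈ Estar m, ‖P.eval z‖
  obtain ⟨x, hx, hxI, σ, hσ, hPx⟩ := halt 0 hd
  simp only [Nat.cast_zero, mul_zero, zero_mul, zero_div, Complex.exp_zero, one_mul, hPp] at hPx
  obtain ⟨hM, hpalt⟩ := alternating_of_map_eval_eq hσ
    (Real.iSup_nonneg fun z => Real.iSup_nonneg fun _ => norm_nonneg _) hPx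
  refine chebNorm_eq_of_forall_le (hPp ▸ (monic_lacunaryPoly hd a).map _)
    (by rw [hPp, natDegree_map, natDegree_lacunaryPoly hd, hN]; ring) fun Q hQ hQdeg => ?_
  obtain ⟨j, hj⟩ := exists_abs_eval_le_of_alternating hd a
    (fun k => (Q.coeff (2 * m * k + l)).re) hx (hxI 0).1 hpalt
  have hω := Complex.isPrimitiveRoot_exp (2 * m) hd.ne'
  calc M = |p.eval (x 0)| := hM
    _ ≤ _ := hj
    _ ≤ ⨆ z ∈ Estar m, ‖Q.eval z‖ :=
      abs_eval_lacunaryPoly_re_coeff_le hω hl hQ (by rw [hQdeg, hN]; ring)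
        (fun z hz => mul_mem_Estar hω.pow_eq_one hz)
        (fun z hz => (isCompact_Estar hm0).le_biSup (f := fun z => ‖Q.eval z‖) (by fun_prop) hz)
        (ofReal_mem_Estar hm0 (hxI j))

/-- Sufficiency part of the alternation characterisation of Chebyshev
polynomials of the star `E_m`. -/
theorem chebyshev_Estar_alternation_sufficient
    (m n l : ℕ) (hm : 1 ≤ m) (hl : l < 2 * m)
    (N : ℕ) (hN : N = 2 * n * m + l) (hN1 : 1 ≤ N)
    (P : Polynomial ℂ) (a : Fin n → ℝ)
    (hform : P = Polynomial.X ^ N +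
      ∑ k : Fin n, Polynomial.C ((a k : ℝ) : ℂ) * Polynomial.X ^ (2 * (k : ℕ) * m + l))
    (halt : ∀ k : ℕ, k < 2 * m → ∃ x : Fin (n + 1) → ℝ, StrictMono x ∧
      (∀ j, x j ∈ Set.Icc (0 : ℝ) ((2 : ℝ) ^ ((1 : ℝ) / (m : ℝ)))) ∧
      ∃ σ : ℂ, ‖σ‖ = 1 ∧ ∀ j : Fin (n + 1),
        P.eval (Complex.exp (Real.pi * (k : ℂ) * Complex.I / (m : ℂ)) * (x j : ℂ))
          = σ * (-1) ^ (j : ℕ) *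
              ((⨆ z ∈ Estar m, ‖P.eval z‖ : ℝ) : ℂ)) :
    (⨆ z ∈ Estar m, ‖P.eval z‖) = chebNorm (Estar m) N :=
  chebyshev_Estar_alternation_sufficient_general m n l hm hl N hN P a hform halt
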